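/- arXiv:2304.14074 — 3 statements merged into one kernel-verified Lean document; each statement's English description precedes it below -/
import Mathlib

section
/- (Stability of PA-III.) Let u⁰ ∈ ℝ^m and let (U_n^k)_{n,k≥0} be a family of vectors in ℝ^m satisfying U_0^k = u⁰ for all k and the Parareal recurrence U_{n+1}^{k+1} = P_1·U_n^{k+1} + (P_{J_2} − P_1)·U_n^k for all n, k ≥ 0 (coarse propagator P_1, fine propagator P_{J_2}). Then for every n and k, ‖U_{n+1}^{k+1}‖ ≤ ‖u⁰‖ + (n+1)·max_{0≤j≤n} ‖U_j^k‖. -/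
/-- The m×m discrete Dirichlet Laplacian with mesh size `h`. -/
noncomputable def Dh (m : ℕ) (h : ℝ) : Matrix (Fin m) (Fin m) ℝ :=
  Matrix.of fun i j =>
    if (i : ℕ) = (j : ℕ) then 1 / h ^ 2 * (-2)
    else if (i : ℕ) + 1 = (j : ℕ) ∨ (j : ℕ) + 1 = (i : ℕ) then 1 / h ^ 2 * 1
    else 0

/-- `Pmat m h ΔT ε i = (I − iΔT·D_h + ε²ΔT·D_h²)⁻¹ (I − iΔT·D_h)`. -/
noncomputable def Pmat (m : ℕ) (h ΔT ε : ℝ) (i : ℕ) : Matrix (Fin m) (Fin m) ℝ :=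
  ((1 : Matrix (Fin m) (Fin m) ℝ) - ((i : ℝ) * ΔT) • Dh m h
      + (ε ^ 2 * ΔT) • Dh m h ^ 2)⁻¹
    * ((1 : Matrix (Fin m) (Fin m) ℝ) - ((i : ℝ) * ΔT) • Dh m h)

/-- `PJmat m h ΔT ε J i = [(I − (iΔT/J)·D_h + ε²(ΔT/J)·D_h²)⁻¹ (I − (iΔT/J)·D_h)]^J`. -/
noncomputable def PJmat (m : ℕ) (h ΔT ε : ℝ) (J i : ℕ) : Matrix (Fin m) (Fin m) ℝ :=
  (((1 : Matrix (Fin m) (Fin m) ℝ) - ((i : ℝ) * ΔT / (J : ℝ)) • Dh m h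
      + (ε ^ 2 * (ΔT / (J : ℝ))) • Dh m h ^ 2)⁻¹
    * ((1 : Matrix (Fin m) (Fin m) ℝ) - ((i : ℝ) * ΔT / (J : ℝ)) • Dh m h)) ^ J

/-- The action of a matrix on `EuclideanSpace ℝ (Fin m)` (i.e. `ℝ^m` with the
Euclidean norm), given by matrix-vector multiplication. -/
noncomputable def act {m : ℕ} (A : Matrix (Fin m) (Fin m) ℝ)
    (U : EuclideanSpace ℝ (Fin m)) : EuclideanSpace ℝ (Fin m) :=
  Matrix.toEuclideanCLM (𝕜 := ℝ) A U

/-- The operator (spectral) norm of a matrix, induced by the Euclidean norm. -/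
noncomputable def opNorm {m : ℕ} (A : Matrix (Fin m) (Fin m) ℝ) : ℝ :=
  ‖Matrix.toEuclideanCLM (𝕜 := ℝ) A‖

/-!
The Laplacian `D_h` is symmetric, and Gershgorin's theorem puts its spectrum in `(-∞, 0]`.
Both propagators are functions of `D_h`: `P_1 = R(D_h)` and `P_{J_2} = R'(D_h)^J`, where `R`, `R'`
are stability functions `x ↦ (1 - c x) / (1 - c x + d x²)` with `c, d ≥ 0`, which map `(-∞, 0]`
into `(0, 1]`. Hence `‖P_1‖ ≤ 1` and `‖P_{J_2} - P_1‖ ≤ max |R'^J - R| ≤ 1` (maximum over the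
spectrum), so the recurrence gives `‖U_{n+1}^{k+1}‖ ≤ ‖U_n^{k+1}‖ + ‖U_n^k‖`, which telescopes
down to `U_0^{k+1} = u⁰`.
-/

open Matrix
open scoped Matrix.Norms.L2Operator

theorem Finset.sum_ite_le_of_subsingleton {ι : Type*} (s : Finset ι) {P : ι → Prop}
    [DecidablePred P] (hP : {i | P i}.Subsingleton) {c : ℝ} (hc : 0 ≤ c) :
    ∑ i ∈ s, (if P i then c else 0) ≤ c := by
  rw [Finset.sum_ite, Finset.sum_const_zero, add_zero, Finset.sum_const, nsmul_eq_mul]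
  have hcard : (s.filter P).card ≤ 1 := Finset.card_le_one.mpr fun i hi j hj =>
    hP (Finset.mem_filter.mp hi).2 (Finset.mem_filter.mp hj).2
  exact mul_le_of_le_one_left hc (by exact_mod_cast hcard)

noncomputable def stabilityFunction (c d x : ℝ) : ℝ := (1 - c * x) / (1 - c * x + d * x ^ 2)

theorem stabilityFunction_mem_Ioc {c d x : ℝ} (hc : 0 ≤ c) (hd : 0 ≤ d) (hx : x ≤ 0) :
    stabilityFunction c d x ∈ Set.Ioc 0 1 := by
  have hnum : 1 ≤ 1 - c * x := by nlinarith
  have hden : 1 - c * x ≤ 1 - c * x + d * x ^ 2 := by nlinarith [sq_nonneg x]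
  exact ⟨div_pos (by linarith) (by linarith), (div_le_one (by linarith)).mpr hden⟩

section SpectralCalculus

variable {n : Type*} [Fintype n] [DecidableEq n]

theorem Matrix.nonpos_of_mem_spectrum_of_sum_row_le_neg_diag {A : Matrix n n ℝ}
    (hA : ∀ k, ∑ j ∈ Finset.univ.erase k, ‖A k j‖ ≤ -A k k) {μ : ℝ} (hμ : μ ∈ spectrum ℝ A) :
    μ ≤ 0 := by
  rw [← spectrum_toLin', ← Module.End.hasEigenvalue_iff_mem_spectrum] at hμ
  obtain ⟨k, hk⟩ := eigenvalue_mem_ball hμ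
  rw [Metric.mem_closedBall, Real.dist_eq, abs_le] at hk
  linarith [hA k]

theorem Matrix.IsHermitian.norm_cfc_le {A : Matrix n n ℝ} (hA : A.IsHermitian) {f : ℝ → ℝ}
    {C : ℝ} (hC : 0 ≤ C) (hf : ∀ x ∈ spectrum ℝ A, |f x| ≤ C) : ‖cfc f A‖ ≤ C := by
  rw [hA.cfc_eq, IsHermitian.cfc, Unitary.conjStarAlgAut_apply,
    CStarRing.norm_mul_mem_unitary _ (Unitary.star_mem hA.eigenvectorUnitary.2),
    CStarRing.norm_coe_unitary_mul, l2_opNorm_diagonal]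
  refine (pi_norm_le_iff_of_nonneg hC).mpr fun i => ?_
  simpa using hf _ (hA.eigenvalues_mem_spectrum_real i)

theorem Matrix.continuousOn_spectrum (A : Matrix n n ℝ) (f : ℝ → ℝ) :
    ContinuousOn f (spectrum ℝ A) :=
  A.finite_spectrum.continuousOn f

theorem Matrix.inv_cfc_mul_cfc {A : Matrix n n ℝ} (hA : IsSelfAdjoint A) {f g : ℝ → ℝ}
    (hg : ∀ x ∈ spectrum ℝ A, g x ≠ 0) :
    (cfc g A)⁻¹ * cfc f A = cfc (fun x => f x / g x) A := by
  have hcont := A.continuousOn_spectrum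
  rw [Matrix.inv_eq_left_inv (B := cfc (fun x => (g x)⁻¹) A), ← cfc_mul _ _ A (hcont _) (hcont _)]
  · exact cfc_congr fun x _ => by rw [div_eq_inv_mul]
  · rw [← cfc_mul _ _ A (hcont _) (hcont _), ← cfc_one ℝ A]
    exact cfc_congr fun x hx => inv_mul_cancel₀ (hg x hx)

theorem Matrix.inv_mul_eq_cfc_stabilityFunction {A : Matrix n n ℝ} (hA : IsSelfAdjoint A)
    (hspec : ∀ x ∈ spectrum ℝ A, x ≤ 0) {c d : ℝ} (hc : 0 ≤ c) (hd : 0 ≤ d) :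
    (1 - c • A + d • A ^ 2)⁻¹ * (1 - c • A) = cfc (stabilityFunction c d) A := by
  have hnum : cfc (fun x => 1 - c * x) A = 1 - c • A := by
    rw [cfc_sub (fun _ => 1) (fun x => c * x), cfc_const_one ℝ A, cfc_const_mul _ _ A,
      cfc_id' ℝ A]
  have hden : cfc (fun x => 1 - c * x + d * x ^ 2) A = 1 - c • A + d • A ^ 2 := by
    rw [cfc_add A (fun x => 1 - c * x) (fun x => d * x ^ 2), hnum, cfc_const_mul _ _ A,
      cfc_pow_id A 2]
  rw [← hden, ← hnum, inv_cfc_mul_cfc hA]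
  · rfl
  · intro x hx
    nlinarith [hspec x hx, sq_nonneg x]

end SpectralCalculus

theorem isHermitian_Dh (m : ℕ) (h : ℝ) : (Dh m h).IsHermitian := by
  ext i j
  simp only [Dh, conjTranspose_apply, of_apply, star_trivial]
  split_ifs <;> first | rfl | omega

theorem Dh_sum_row_le_neg_diag (m : ℕ) (h : ℝ) (k : Fin m) :
    ∑ j ∈ Finset.univ.erase k, ‖Dh m h k j‖ ≤ -Dh m h k k := by
  have hc : 0 ≤ 1 / h ^ 2 := by positivity
  have hentry : ∀ j ∈ Finset.univ.erase k, ‖Dh m h k j‖ ≤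
      (if (k : ℕ) + 1 = j then 1 / h ^ 2 else 0) + (if (j : ℕ) + 1 = k then 1 / h ^ 2 else 0) := by
    intro j hj
    have hjk : (k : ℕ) ≠ j := fun e => (Finset.mem_erase.mp hj).1 (Fin.ext e).symm
    simp only [Dh, of_apply, if_neg hjk]
    split_ifs <;> simp only [mul_one, norm_zero, Real.norm_of_nonneg hc] <;>
      first | omega | linarith
  calc ∑ j ∈ Finset.univ.erase k, ‖Dh m h k j‖
      ≤ ∑ j ∈ Finset.univ.erase k, ((if (k : ℕ) + 1 = j then 1 / h ^ 2 else 0)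
          + (if (j : ℕ) + 1 = k then 1 / h ^ 2 else 0)) := Finset.sum_le_sum hentry
    _ ≤ 1 / h ^ 2 + 1 / h ^ 2 := by
        rw [Finset.sum_add_distrib]
        exact add_le_add
          (Finset.sum_ite_le_of_subsingleton _ (fun i hi j hj => Fin.ext (hi.symm.trans hj)) hc)
          (Finset.sum_ite_le_of_subsingleton _ (fun i hi j hj => Fin.ext <| by
            simp only [Set.mem_ofPred_eq] at hi hj; omega) hc)
    _ = -Dh m h k k := by rw [Dh, of_apply, if_pos rfl]; ring

theorem nonpos_of_mem_spectrum_Dh {m : ℕ} {h x : ℝ} (hx : x ∈ spectrum ℝ (Dh m h)) : x ≤ 0 :=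
  nonpos_of_mem_spectrum_of_sum_row_le_neg_diag (Dh_sum_row_le_neg_diag m h) hx

theorem Pmat_eq_cfc {m : ℕ} {h ΔT ε : ℝ} (hΔT : 0 ≤ ΔT) (i : ℕ) :
    Pmat m h ΔT ε i = cfc (stabilityFunction (i * ΔT) (ε ^ 2 * ΔT)) (Dh m h) :=
  inv_mul_eq_cfc_stabilityFunction (isHermitian_Dh m h).isSelfAdjoint
    (fun _ => nonpos_of_mem_spectrum_Dh) (by positivity) (by positivity)

theorem PJmat_eq_cfc {m : ℕ} {h ΔT ε : ℝ} (hΔT : 0 ≤ ΔT) (J i : ℕ) :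
    PJmat m h ΔT ε J i =
      cfc (fun x => stabilityFunction (i * ΔT / J) (ε ^ 2 * (ΔT / J)) x ^ J) (Dh m h) := by
  rw [PJmat, inv_mul_eq_cfc_stabilityFunction (isHermitian_Dh m h).isSelfAdjoint
    (fun _ => nonpos_of_mem_spectrum_Dh) (by positivity) (by positivity),
    ← cfc_pow _ J _ ((Dh m h).continuousOn_spectrum _) (isHermitian_Dh m h).isSelfAdjoint]

theorem norm_Pmat_le_one {m : ℕ} {h ΔT ε : ℝ} (hΔT : 0 ≤ ΔT) (i : ℕ) :
    ‖Pmat m h ΔT ε i‖ ≤ 1 := by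
  rw [Pmat_eq_cfc hΔT]
  refine (isHermitian_Dh m h).norm_cfc_le zero_le_one fun x hx => ?_
  obtain ⟨hpos, hle⟩ := stabilityFunction_mem_Ioc (c := i * ΔT) (d := ε ^ 2 * ΔT)
    (by positivity) (by positivity) (nonpos_of_mem_spectrum_Dh hx)
  exact abs_le.mpr ⟨by linarith, hle⟩

theorem norm_PJmat_sub_Pmat_le_one {m : ℕ} {h ΔT ε : ℝ} (hΔT : 0 ≤ ΔT) (J i i' : ℕ) :
    ‖PJmat m h ΔT ε J i - Pmat m h ΔT ε i'‖ ≤ 1 := by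
  rw [PJmat_eq_cfc hΔT, Pmat_eq_cfc hΔT,
    ← cfc_sub _ _ _ ((Dh m h).continuousOn_spectrum _) ((Dh m h).continuousOn_spectrum _)]
  refine (isHermitian_Dh m h).norm_cfc_le zero_le_one fun x hx => ?_
  have hx0 := nonpos_of_mem_spectrum_Dh hx
  obtain ⟨hpos, hle⟩ := stabilityFunction_mem_Ioc (c := i * ΔT / J) (d := ε ^ 2 * (ΔT / J))
    (by positivity) (by positivity) hx0
  obtain ⟨hpos', hle'⟩ := stabilityFunction_mem_Ioc (c := i' * ΔT) (d := ε ^ 2 * ΔT)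
    (by positivity) (by positivity) hx0
  have hpow := pow_le_one₀ (n := J) hpos.le hle
  have hpow_pos := pow_pos hpos J
  exact abs_sub_le_iff.mpr ⟨by linarith, by linarith⟩

theorem norm_act_le_of_norm_le_one {m : ℕ} {A : Matrix (Fin m) (Fin m) ℝ} (hA : ‖A‖ ≤ 1)
    (v : EuclideanSpace ℝ (Fin m)) : ‖act A v‖ ≤ ‖v‖ :=
  ((toEuclideanCLM (𝕜 := ℝ) A).le_opNorm v).trans (mul_le_of_le_one_left (norm_nonneg v) hA)

section Parareal

variable {E : Type*} [SeminormedAddCommGroup E] {P Q : E → E} {u₀ : E} {U : ℕ → ℕ → E}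

theorem norm_parareal_le_add_sum (hP : ∀ v, ‖P v‖ ≤ ‖v‖) (hQ : ∀ v, ‖Q v‖ ≤ ‖v‖)
    (h0 : ∀ k, U 0 k = u₀) (hrec : ∀ n k, U (n + 1) (k + 1) = P (U n (k + 1)) + Q (U n k))
    (n k : ℕ) : ‖U n (k + 1)‖ ≤ ‖u₀‖ + ∑ j ∈ Finset.range n, ‖U j k‖ := by
  induction n with
  | zero => simp [h0]
  | succ n ih =>
    calc ‖U (n + 1) (k + 1)‖ ≤ ‖U n (k + 1)‖ + ‖U n k‖ := by
          rw [hrec]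
          exact (norm_add_le _ _).trans (add_le_add (hP _) (hQ _))
      _ ≤ ‖u₀‖ + ∑ j ∈ Finset.range (n + 1), ‖U j k‖ := by
          rw [Finset.sum_range_succ]
          linarith

theorem norm_parareal_le_add_mul_sup' (hP : ∀ v, ‖P v‖ ≤ ‖v‖) (hQ : ∀ v, ‖Q v‖ ≤ ‖v‖)
    (h0 : ∀ k, U 0 k = u₀) (hrec : ∀ n k, U (n + 1) (k + 1) = P (U n (k + 1)) + Q (U n k))
    (n k : ℕ) :
    ‖U (n + 1) (k + 1)‖ ≤ ‖u₀‖ + ((n : ℝ) + 1) *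
      (Finset.range (n + 1)).sup' Finset.nonempty_range_add_one fun j => ‖U j k‖ := by
  refine (norm_parareal_le_add_sum hP hQ h0 hrec (n + 1) k).trans (add_le_add le_rfl ?_)
  calc ∑ j ∈ Finset.range (n + 1), ‖U j k‖
      ≤ (Finset.range (n + 1)).card •
          (Finset.range (n + 1)).sup' Finset.nonempty_range_add_one fun j => ‖U j k‖ :=
        Finset.sum_le_card_nsmul _ _ _ fun j hj => Finset.le_sup' (fun j => ‖U j k‖) hj
    _ = _ := by rw [Finset.card_range, nsmul_eq_mul]; push_cast; rfl

end Parareal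

theorem stmt13_general (h ΔT ε : ℝ) (hΔT : 0 < ΔT)
    (m : ℕ) (J : ℕ)
    (u0 : EuclideanSpace ℝ (Fin m)) (U : ℕ → ℕ → EuclideanSpace ℝ (Fin m))
    (h0 : ∀ k, U 0 k = u0)
    (hrec : ∀ n k, U (n + 1) (k + 1) =
      act (Pmat m h ΔT ε 1) (U n (k + 1))
        + act (PJmat m h ΔT ε J 2 - Pmat m h ΔT ε 1) (U n k)) :
    ∀ n k, ‖U (n + 1) (k + 1)‖ ≤ ‖u0‖ +
      ((n : ℝ) + 1) *
        ((Finset.range (n + 1)).sup' (Finset.nonempty_range_iff.mpr n.succ_ne_zero)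
          fun j => ‖U j k‖) :=
  norm_parareal_le_add_mul_sup'
    (norm_act_le_of_norm_le_one (norm_Pmat_le_one hΔT.le 1))
    (norm_act_le_of_norm_le_one (norm_PJmat_sub_Pmat_le_one hΔT.le J 2 1)) h0 hrec

theorem stmt13 (h ΔT ε : ℝ) (hh : 0 < h) (hΔT : 0 < ΔT) (hε : 0 < ε)
    (m : ℕ) (hm : 1 ≤ m) (J : ℕ) (hJ : 2 ≤ J)
    (u0 : EuclideanSpace ℝ (Fin m)) (U : ℕ → ℕ → EuclideanSpace ℝ (Fin m))
    (h0 : ∀ k, U 0 k = u0)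
    (hrec : ∀ n k, U (n + 1) (k + 1) =
      act (Pmat m h ΔT ε 1) (U n (k + 1))
        + act (PJmat m h ΔT ε J 2 - Pmat m h ΔT ε 1) (U n k)) :
    ∀ n k, ‖U (n + 1) (k + 1)‖ ≤ ‖u0‖ +
      ((n : ℝ) + 1) *
        ((Finset.range (n + 1)).sup' (Finset.nonempty_range_iff.mpr n.succ_ne_zero)
          fun j => ‖U j k‖) :=
  stmt13_general h ΔT ε hΔT m J u0 U h0 hrec
end

section
/- (Convergence of PA-III.) Let N ≥ 1 be an integer, u⁰ ∈ ℝ^m, and define the fine solution by U(T_0) = u⁰ and U(T_{n+1}) = P_{J_2}·U(T_n) for 0 ≤ n ≤ N−1. Let (U_n^k)_{0≤n≤N, k≥0} satisfy U_0^k = u⁰ for all k and U_{n+1}^{k+1} = P_1·U_n^{k+1} + (P_{J_2} − P_1)·U_n^k for 0 ≤ n ≤ N−1 and k ≥ 0. Set E_n^k = U(T_n) − U_n^k, α = ‖P_{J_2} − P_1‖ and β = ‖P_1‖ (so β < 1). Then for every k ≥ 0, max_{1≤j≤N} ‖E_j^{k+1}‖ ≤ α^{k+1} · min{ ((1 − β^{N−1})/(1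 − β))^{k+1} , C(N−1, k+1) } · max_{1≤j≤N} ‖E_j^0‖, where C(·,·) denotes the binomial coefficient. -/
open Finset
open scoped RealInnerProductSpace

section ErrorRecursion

variable {α β : ℝ} {N : ℕ} {e : ℕ → ℕ → ℝ}

theorem le_geom_sum_mul_of_rec (hα : 0 ≤ α) (hβ : 0 ≤ β) (he0 : ∀ k, e 0 k = 0)
    (hrec : ∀ n < N, ∀ k, e (n + 1) (k + 1) ≤ β * e n (k + 1) + α * e n k)
    {k : ℕ} {c : ℝ} (hc : ∀ n < N, e (n + 1) k ≤ c) :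
    ∀ n < N, e (n + 1) (k + 1) ≤ α * (∑ i ∈ range n, β ^ i) * c := by
  intro n
  induction n with
  | zero => intro hN; simpa [he0] using hrec 0 hN k
  | succ n ih =>
    intro hn
    calc e (n + 2) (k + 1) ≤ β * e (n + 1) (k + 1) + α * e (n + 1) k := hrec (n + 1) hn k
      _ ≤ β * (α * (∑ i ∈ range n, β ^ i) * c) + α * c := by
          gcongr
          exacts [ih (by omega), hc n (by omega)]
      _ = α * (∑ i ∈ range (n + 1), β ^ i) * c := by
          rw [geom_sum_succ]; ring

theorem le_pow_mul_choose_mul_of_rec (hα : 0 ≤ α) (hβ : β ≤ 1)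
    (he : ∀ n k, 0 ≤ e n k) (he0 : ∀ k, e 0 k = 0)
    (hrec : ∀ n < N, ∀ k, e (n + 1) (k + 1) ≤ β * e n (k + 1) + α * e n k)
    {c : ℝ} (hc : ∀ n < N, e (n + 1) 0 ≤ c) :
    ∀ k, ∀ n < N, e (n + 1) k ≤ α ^ k * n.choose k * c := by
  intro k
  induction k with
  | zero => simpa using hc
  | succ k ihk =>
    intro n
    induction n with
    | zero => intro hN; simpa [he0] using hrec 0 hN k
    | succ n ihn =>
      intro hn
      calc e (n + 2) (k + 1) ≤ β * e (n + 1) (k + 1) + α * e (n + 1) k := hrec (n + 1) hn k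
        _ ≤ e (n + 1) (k + 1) + α * e (n + 1) k := by
            gcongr; exact mul_le_of_le_one_left (he _ _) hβ
        _ ≤ α ^ (k + 1) * n.choose (k + 1) * c + α * (α ^ k * n.choose k * c) := by
            gcongr
            exacts [ihn (by omega), ihk n (by omega)]
        _ = α ^ (k + 1) * (n + 1).choose (k + 1) * c := by
            rw [Nat.choose_succ_succ', Nat.cast_add]; ring

theorem sup'_le_pow_mul_min_mul_sup'_of_rec (hN : 1 ≤ N) (hα : 0 ≤ α) (hβ0 : 0 ≤ β)
    (hβ1 : β < 1) (he : ∀ n k, 0 ≤ e n k) (he0 : ∀ k, e 0 k = 0)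
    (hrec : ∀ n < N, ∀ k, e (n + 1) (k + 1) ≤ β * e n (k + 1) + α * e n k) :
    ∀ k, ((Icc 1 N).sup' (nonempty_Icc.mpr hN) fun j => e j (k + 1)) ≤
      α ^ (k + 1) * min (((1 - β ^ (N - 1)) / (1 - β)) ^ (k + 1)) ((N - 1).choose (k + 1) : ℝ) *
      ((Icc 1 N).sup' (nonempty_Icc.mpr hN) fun j => e j 0) := by
  intro k
  set M : ℕ → ℝ := fun k => (Icc 1 N).sup' (nonempty_Icc.mpr hN) fun j => e j k
  have le_M : ∀ k, ∀ n < N, e (n + 1) k ≤ M k := fun k n hn =>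
    le_sup' (fun j => e j k) (mem_Icc.mpr ⟨by omega, by omega⟩)
  have M_nonneg : ∀ k, 0 ≤ M k := fun k => (he 1 k).trans (le_M k 0 (by omega))
  have M_le : ∀ k (c : ℝ), (∀ n < N, e (n + 1) k ≤ c) → M k ≤ c := fun k c hc =>
    sup'_le _ _ fun j hj => by
      obtain ⟨n, rfl⟩ : ∃ n, j = n + 1 := ⟨j - 1, by grind⟩
      exact hc n (by grind)
  set G := (1 - β ^ (N - 1)) / (1 - β)
  have hG : ∑ i ∈ range (N - 1), β ^ i = G := by
    rw [geom_sum_eq hβ1.ne, ← neg_div_neg_eq, neg_sub, neg_sub]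
  have hG0 : 0 ≤ G := hG ▸ sum_nonneg fun i _ => pow_nonneg hβ0 i
  have hstep : ∀ k, M (k + 1) ≤ α * G * M k := fun k =>
    M_le _ _ fun n hn => (le_geom_sum_mul_of_rec hα hβ0 he0 hrec (le_M k) n hn).trans <| by
      rw [← hG]
      gcongr
      exacts [M_nonneg k, by omega]
  have hgeom : ∀ k, M (k + 1) ≤ α ^ (k + 1) * G ^ (k + 1) * M 0 := by
    intro k
    induction k with
    | zero => simpa using hstep 0
    | succ k ih =>
      calc M (k + 2) ≤ α * G * M (k + 1) := hstep (k + 1)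
        _ ≤ α * G * (α ^ (k + 1) * G ^ (k + 1) * M 0) := by gcongr
        _ = α ^ (k + 2) * G ^ (k + 2) * M 0 := by ring
  have hchoose : M (k + 1) ≤ α ^ (k + 1) * (N - 1).choose (k + 1) * M 0 :=
    M_le _ _ fun n hn =>
      (le_pow_mul_choose_mul_of_rec hα hβ1.le he he0 hrec (le_M 0) (k + 1) n hn).trans <| by
        gcongr
        exacts [M_nonneg 0, by omega]
  rw [mul_min_of_nonneg _ _ (pow_nonneg hα _), min_mul_of_nonneg _ _ (M_nonneg 0)]
  exact le_min (hgeom k) hchoose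

end ErrorRecursion

theorem ContinuousLinearMap.norm_sub_add_sub_apply_le {𝕜 E F : Type*} [NontriviallyNormedField 𝕜]
    [SeminormedAddCommGroup E] [NormedSpace 𝕜 E] [SeminormedAddCommGroup F] [NormedSpace 𝕜 F]
    (A B : E →L[𝕜] F) (y x z : E) :
    ‖A y - (B x + (A - B) z)‖ ≤ ‖B‖ * ‖y - x‖ + ‖A - B‖ * ‖y - z‖ := by
  have hsplit : A y - (B x + (A - B) z) = B (y - x) + (A - B) (y - z) := by
    simp only [map_sub, sub_apply]; abel
  rw [hsplit]
  exact (norm_add_le _ _).trans (add_le_add (B.le_opNorm _) ((A - B).le_opNorm _))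

section Contraction

variable {E : Type*}

theorem ContinuousLinearMap.norm_lt_one_of_norm_apply_lt {F : Type*} [NormedAddCommGroup E]
    [NormedSpace ℝ E] [FiniteDimensional ℝ E] [SeminormedAddCommGroup F] [NormedSpace ℝ F]
    (f : E →L[ℝ] F) (hf : ∀ x ≠ 0, ‖f x‖ < ‖x‖) : ‖f‖ < 1 := by
  cases subsingleton_or_nontrivial E
  · simp [ContinuousLinearMap.opNorm_subsingleton]
  obtain ⟨x, hx, hfx⟩ : ‖f‖ ∈ (fun x => ‖f x‖) '' Metric.sphere 0 1 :=
    f.sSup_sphere_eq_norm ▸ ((isCompact_sphere 0 1).image (by fun_prop)).sSup_mem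
      ((NormedSpace.sphere_nonempty.mpr zero_le_one).image _)
  rw [mem_sphere_zero_iff_norm] at hx
  rw [← hfx, ← hx]
  exact hf x (norm_ne_zero_iff.mp (hx ▸ one_ne_zero))

theorem ContinuousLinearMap.norm_lt_one_of_mul_eq [NormedAddCommGroup E] [NormedSpace ℝ E]
    [FiniteDimensional ℝ E] {P Q R : E →L[ℝ] E} (hPQ : P * Q = R)
    (hRQ : ∀ w ≠ 0, ‖R w‖ < ‖Q w‖) : ‖P‖ < 1 := by
  have hQinj : Function.Injective Q := by
    refine (injective_iff_map_eq_zero Q).mpr fun w hw => ?_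
    by_contra hw0
    simpa [hw] using (norm_nonneg _).trans_lt (hRQ w hw0)
  have hQsurj : Function.Surjective Q :=
    LinearMap.injective_iff_surjective (f := (Q : E →ₗ[ℝ] E)).mp hQinj
  refine P.norm_lt_one_of_norm_apply_lt fun x hx => ?_
  obtain ⟨w, rfl⟩ := hQsurj x
  rw [← mul_apply_eq_comp, hPQ]
  exact hRQ w (by rintro rfl; simp at hx)

theorem norm_sub_smul_apply_lt [NormedAddCommGroup E] [InnerProductSpace ℝ E] {D : E →L[ℝ] E}
    (hsym : (D : E →ₗ[ℝ] E).IsSymmetric) (hneg : ∀ v ≠ 0, ⟪D v, v⟫ < 0) {a b : ℝ}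
    (ha : 0 ≤ a) (hb : 0 < b) {w : E} (hw : w ≠ 0) :
    ‖(1 - a • D) w‖ < ‖(1 - a • D + b • D ^ 2 : E →L[ℝ] E) w‖ := by
  have hDw : D w ≠ 0 := fun h => by simpa [h] using hneg w hw
  have hcross : 0 < ⟪(1 - a • D) w, (D ^ 2) w⟫ := by
    have hDD : ⟪w, D (D w)⟫ = ‖D w‖ ^ 2 := by
      rw [← real_inner_self_eq_norm_sq]; exact (hsym w (D w)).symm
    have hcube : ⟪D w, D (D w)⟫ < 0 := real_inner_comm (D w) _ ▸ hneg (D w) hDw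
    simp only [sub_apply, one_apply_eq_self, smul_apply, pow_two, mul_apply_eq_comp,
      inner_sub_left, real_inner_smul_left, hDD]
    nlinarith [norm_pos_iff.mpr hDw]
  have hsq : ‖(1 - a • D) w‖ ^ 2 < ‖(1 - a • D + b • D ^ 2 : E →L[ℝ] E) w‖ ^ 2 := by
    rw [add_apply, smul_apply, norm_add_sq_real, real_inner_smul_right, norm_smul,
      Real.norm_of_nonneg hb.le]
    nlinarith
  exact lt_of_pow_lt_pow_left₀ 2 (norm_nonneg _) hsq

end Contraction

namespace Matrix

def diffMat (m : ℕ) : Matrix (Fin (m + 1)) (Fin m) ℝ :=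
  of fun k i => (if k = i.castSucc then 1 else 0) - (if k = i.succ then 1 else 0)

theorem transpose_diffMat_mul_diffMat_apply (m : ℕ) (i j : Fin m) :
    ((diffMat m)ᵀ * diffMat m) i j =
      if (i : ℕ) = j then 2 else if (i : ℕ) + 1 = j ∨ (j : ℕ) + 1 = i then -1 else 0 := by
  simp only [mul_apply, transpose_apply, diffMat, of_apply, sub_mul, mul_sub, ite_mul, one_mul,
    zero_mul, Finset.sum_sub_distrib, Finset.sum_ite_eq', Finset.mem_univ, if_true]
  simp only [Fin.ext_iff, Fin.val_castSucc, Fin.val_succ]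
  split_ifs <;> first | omega | norm_num

theorem diffMat_mulVec_injective (m : ℕ) : Function.Injective (diffMat m).mulVec := by
  have hdet : ((diffMat m).submatrix Fin.castSucc id).det = 1 := by
    rw [det_of_isLowerTriangular]
    · simp [diffMat, Fin.castSucc_lt_succ.ne]
    · intro i j hij
      have hij : (i : ℕ) < j := hij
      simp [diffMat, Fin.ext_iff, hij.ne, show (i : ℕ) ≠ j + 1 by omega]
  refine (injective_iff_map_eq_zero (mulVecLin (diffMat m))).mpr fun v hv => ?_
  exact eq_zero_of_mulVec_eq_zero (M := (diffMat m).submatrix Fin.castSucc id)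
    (hdet ▸ one_ne_zero) (funext fun i => congrFun hv i.castSucc)

theorem PosDef.inner_toEuclideanCLM_self_pos {n : Type*} [Fintype n] [DecidableEq n]
    {A : Matrix n n ℝ} (hA : A.PosDef) {v : EuclideanSpace ℝ n} (hv : v ≠ 0) :
    0 < ⟪v, toEuclideanCLM (𝕜 := ℝ) A v⟫ := by
  rw [inner_toEuclideanCLM]
  simpa using hA.dotProduct_mulVec_pos (x := WithLp.ofLp v) (by simpa using hv)

end Matrix

open Matrix

theorem Dh_eq_smul (m : ℕ) (h : ℝ) : Dh m h = (-(h ^ 2)⁻¹) • ((diffMat m)ᵀ * diffMat m) := by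
  ext i j
  rw [Matrix.smul_apply, transpose_diffMat_mul_diffMat_apply]
  simp only [Dh, of_apply, smul_eq_mul]
  split_ifs <;> ring

theorem posDef_neg_Dh (m : ℕ) {h : ℝ} (hh : h ≠ 0) : (-Dh m h).PosDef := by
  rw [Dh_eq_smul, neg_smul, neg_neg]
  have hpd := PosDef.conjTranspose_mul_self (diffMat m) (diffMat_mulVec_injective m)
  rw [conjTranspose_eq_transpose_of_trivial] at hpd
  exact hpd.smul (by positivity)

theorem isSymmetric_toEuclideanCLM_Dh (m : ℕ) {h : ℝ} (hh : h ≠ 0) :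
    (toEuclideanCLM (𝕜 := ℝ) (Dh m h) :
      EuclideanSpace ℝ (Fin m) →ₗ[ℝ] EuclideanSpace ℝ (Fin m)).IsSymmetric := by
  rw [coe_toEuclideanCLM_eq_toEuclideanLin, isSymmetric_toEuclideanLin_iff]
  simpa using (posDef_neg_Dh m hh).isHermitian.neg

theorem inner_toEuclideanCLM_Dh_self_neg (m : ℕ) {h : ℝ} (hh : h ≠ 0)
    {v : EuclideanSpace ℝ (Fin m)} (hv : v ≠ 0) :
    ⟪toEuclideanCLM (𝕜 := ℝ) (Dh m h) v, v⟫ < 0 := by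
  have hpos := (posDef_neg_Dh m hh).inner_toEuclideanCLM_self_pos hv
  rw [map_neg, _root_.neg_apply, inner_neg_right, real_inner_comm] at hpos
  linarith

theorem opNorm_Pmat_one_lt_one (m : ℕ) {h ΔT ε : ℝ} (hh : h ≠ 0) (hΔT : 0 < ΔT) (hε : ε ≠ 0) :
    opNorm (Pmat m h ΔT ε 1) < 1 := by
  set D := Dh m h
  set R : Matrix (Fin m) (Fin m) ℝ := 1 - ΔT • D
  set Q : Matrix (Fin m) (Fin m) ℝ := R + (ε ^ 2 * ΔT) • D ^ 2
  have hRQ : ∀ w ≠ 0, ‖toEuclideanCLM (𝕜 := ℝ) R w‖ < ‖toEuclideanCLM (𝕜 := ℝ) Q w‖ :=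
    fun w hw => by
      simpa [R, Q] using norm_sub_smul_apply_lt (isSymmetric_toEuclideanCLM_Dh m hh)
        (fun v => inner_toEuclideanCLM_Dh_self_neg m hh) hΔT.le (by positivity) hw
  have hQ : IsUnit Q.det := by
    rw [← isUnit_iff_isUnit_det, ← mulVec_injective_iff_isUnit]
    refine (injective_iff_map_eq_zero (mulVecLin Q)).mpr fun v hv => ?_
    by_contra hv0
    have hlt := hRQ (WithLp.toLp 2 v) (by simpa using hv0)
    simp only [toEuclideanCLM_toLp, show Q *ᵥ v = 0 from hv, WithLp.toLp_zero, norm_zero] at hlt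
    exact hlt.not_ge (norm_nonneg _)
  have hPQ : Pmat m h ΔT ε 1 * Q = R := by
    have hcomm : Commute R Q := (Commute.refl R).add_right
      ((((Commute.one_left D).sub_left ((Commute.refl D).smul_left ΔT)).pow_right 2).smul_right _)
    rw [show Pmat m h ΔT ε 1 = Q⁻¹ * R by simp [Pmat, Q, R, D], mul_assoc, hcomm.eq,
      nonsing_inv_mul_cancel_left Q R hQ]
  exact ContinuousLinearMap.norm_lt_one_of_mul_eq (by rw [← map_mul, hPQ]) hRQ

theorem stmt14_general (h ΔT ε : ℝ) (hh : 0 < h) (hΔT : 0 < ΔT) (hε : 0 < ε)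
    (m : ℕ) (J : ℕ)
    (N : ℕ) (hN : 1 ≤ N)
    (u0 : EuclideanSpace ℝ (Fin m))
    (Uf : ℕ → EuclideanSpace ℝ (Fin m)) (U : ℕ → ℕ → EuclideanSpace ℝ (Fin m))
    (hUf0 : Uf 0 = u0)
    (hUfrec : ∀ n < N, Uf (n + 1) = act (PJmat m h ΔT ε J 2) (Uf n))
    (h0 : ∀ k, U 0 k = u0)
    (hrec : ∀ n < N, ∀ k, U (n + 1) (k + 1) =
      act (Pmat m h ΔT ε 1) (U n (k + 1))
        + act (PJmat m h ΔT ε J 2 - Pmat m h ΔT ε 1) (U n k)) :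
    ∀ k : ℕ,
      ((Finset.Icc 1 N).sup' (Finset.nonempty_Icc.mpr hN)
          fun j => ‖Uf j - U j (k + 1)‖) ≤
        opNorm (PJmat m h ΔT ε J 2 - Pmat m h ΔT ε 1) ^ (k + 1) *
          min (((1 - opNorm (Pmat m h ΔT ε 1) ^ (N - 1)) /
                  (1 - opNorm (Pmat m h ΔT ε 1))) ^ (k + 1))
              ((N - 1).choose (k + 1) : ℝ) *
          ((Finset.Icc 1 N).sup' (Finset.nonempty_Icc.mpr hN)
            fun j => ‖Uf j - U j 0‖) := by
  have herr : ∀ n < N, ∀ k, ‖Uf (n + 1) - U (n + 1) (k + 1)‖ ≤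
      opNorm (Pmat m h ΔT ε 1) * ‖Uf n - U n (k + 1)‖ +
        opNorm (PJmat m h ΔT ε J 2 - Pmat m h ΔT ε 1) * ‖Uf n - U n k‖ := by
    intro n hn k
    rw [hUfrec n hn, hrec n hn k]
    simpa only [act, opNorm, map_sub] using
      (Matrix.toEuclideanCLM (𝕜 := ℝ) (PJmat m h ΔT ε J 2)).norm_sub_add_sub_apply_le
        (Matrix.toEuclideanCLM (𝕜 := ℝ) (Pmat m h ΔT ε 1)) (Uf n) (U n (k + 1)) (U n k)
  exact sup'_le_pow_mul_min_mul_sup'_of_rec (e := fun n k => ‖Uf n - U n k‖) hN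
    (norm_nonneg _) (norm_nonneg _) (opNorm_Pmat_one_lt_one m hh.ne' hΔT hε.ne')
    (fun _ _ => norm_nonneg _) (fun k => by simp [hUf0, h0]) herr

theorem stmt14 (h ΔT ε : ℝ) (hh : 0 < h) (hΔT : 0 < ΔT) (hε : 0 < ε)
    (m : ℕ) (hm : 1 ≤ m) (J : ℕ) (hJ : 2 ≤ J)
    (N : ℕ) (hN : 1 ≤ N)
    (u0 : EuclideanSpace ℝ (Fin m))
    (Uf : ℕ → EuclideanSpace ℝ (Fin m)) (U : ℕ → ℕ → EuclideanSpace ℝ (Fin m))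
    (hUf0 : Uf 0 = u0)
    (hUfrec : ∀ n < N, Uf (n + 1) = act (PJmat m h ΔT ε J 2) (Uf n))
    (h0 : ∀ k, U 0 k = u0)
    (hrec : ∀ n < N, ∀ k, U (n + 1) (k + 1) =
      act (Pmat m h ΔT ε 1) (U n (k + 1))
        + act (PJmat m h ΔT ε J 2 - Pmat m h ΔT ε 1) (U n k)) :
    ∀ k : ℕ,
      ((Finset.Icc 1 N).sup' (Finset.nonempty_Icc.mpr hN)
          fun j => ‖Uf j - U j (k + 1)‖) ≤
        opNorm (PJmat m h ΔT ε J 2 - Pmat m h ΔT ε 1) ^ (k + 1) *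
          min (((1 - opNorm (Pmat m h ΔT ε 1) ^ (N - 1)) /
                  (1 - opNorm (Pmat m h ΔT ε 1))) ^ (k + 1))
              ((N - 1).choose (k + 1) : ℝ) *
          ((Finset.Icc 1 N).sup' (Finset.nonempty_Icc.mpr hN)
            fun j => ‖Uf j - U j 0‖) :=
  stmt14_general h ΔT ε hh hΔT hε m J N hN u0 Uf U hUf0 hUfrec h0 hrec
end

section
/- (Stability of NPA-I.) Let ℱ : ℝ^m → ℝ^m be a map and C ≥ 0 a constant such that ‖ℱ(U) − P_1·U‖ ≤ C·ΔT²·‖U‖ for every U ∈ ℝ^m (local-truncation-error difference between the nonlinear fine propagator and the linear coarse propagator 𝒢(U) = P_1·U). Let u⁰ ∈ ℝ^m and let (U_n^k)_{n,k≥0} satisfy U_0^k = u⁰ for all k and U_{n+1}^{k+1} = P_1·U_n^{k+1} + ℱ(U_n^k) − P_1·U_n^k for all n, k ≥ 0. Then for every n and k, ‖U_{n+1}^{k+1}‖ ≤ ‖u⁰‖ + C·(n+1)·ΔT²·max_{0≤j≤n} ‖U_j^k‖. -/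
/-!
Write `P₁ = M⁻¹ N` with `N = I - ΔT D_h` and `M = N + ε²ΔT D_h²`. Since `-D_h = h⁻² BᵀB` for the
difference matrix `B`, `D_h` is negative semidefinite, so `M` is invertible and
`M² - N² = ε²ΔT D_h (2N + ε²ΔT D_h²) D_h` is positive semidefinite: `‖N y‖ ≤ ‖M y‖` for all `y`.
As `M` and `N` are commuting polynomials in `D_h`, `P₁ = N M⁻¹` is a contraction. The recursion
and the triangle inequality then give `‖U_{n+1}^{k+1}‖ ≤ ‖U_n^{k+1}‖ + CΔT² ‖U_n^k‖`, which
telescopes in `n`.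
-/

open Matrix

namespace Matrix

variable {n : Type*} [Fintype n] [DecidableEq n]

lemma norm_toEuclideanCLM_apply_sq (A : Matrix n n ℝ) (y : EuclideanSpace ℝ n) :
    ‖toEuclideanCLM (𝕜 := ℝ) A y‖ ^ 2 = y.ofLp ⬝ᵥ (Aᴴ * A) *ᵥ y.ofLp := by
  rw [← real_inner_self_eq_norm_sq, ← ContinuousLinearMap.adjoint_inner_right,
    ← ContinuousLinearMap.star_eq_adjoint, ← map_star, ← mul_apply_eq_comp,
    ← map_mul, inner_toEuclideanCLM, star_eq_conjTranspose]

lemma norm_toEuclideanCLM_apply_le_of_posSemidef {M N : Matrix n n ℝ}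
    (hMN : (Mᴴ * M - Nᴴ * N).PosSemidef) (y : EuclideanSpace ℝ n) :
    ‖toEuclideanCLM (𝕜 := ℝ) N y‖ ≤ ‖toEuclideanCLM (𝕜 := ℝ) M y‖ := by
  have hquad := hMN.dotProduct_mulVec_nonneg y.ofLp
  rw [star_trivial, sub_mulVec, dotProduct_sub, sub_nonneg,
    ← norm_toEuclideanCLM_apply_sq, ← norm_toEuclideanCLM_apply_sq] at hquad
  exact (sq_le_sq₀ (norm_nonneg _) (norm_nonneg _)).mp hquad

lemma norm_toEuclideanCLM_inv_mul_apply_le {M N : Matrix n n ℝ} (hM : IsUnit M.det)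
    (hcomm : Commute M N) (hMN : (Mᴴ * M - Nᴴ * N).PosSemidef) (x : EuclideanSpace ℝ n) :
    ‖toEuclideanCLM (𝕜 := ℝ) (M⁻¹ * N) x‖ ≤ ‖x‖ := by
  have hswap : M⁻¹ * N = N * M⁻¹ := calc
    M⁻¹ * N = M⁻¹ * (N * M) * M⁻¹ := by
      rw [Matrix.mul_assoc M⁻¹, Matrix.mul_assoc N, mul_nonsing_inv _ hM, Matrix.mul_one]
    _ = N * M⁻¹ := by rw [← hcomm.eq, nonsing_inv_mul_cancel_left _ _ hM]
  calc ‖toEuclideanCLM (𝕜 := ℝ) (M⁻¹ * N) x‖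
      = ‖toEuclideanCLM (𝕜 := ℝ) N (toEuclideanCLM (𝕜 := ℝ) M⁻¹ x)‖ := by
        rw [hswap, map_mul, mul_apply_eq_comp]
    _ ≤ ‖toEuclideanCLM (𝕜 := ℝ) M (toEuclideanCLM (𝕜 := ℝ) M⁻¹ x)‖ :=
        norm_toEuclideanCLM_apply_le_of_posSemidef hMN _
    _ = ‖x‖ := by
        rw [← mul_apply_eq_comp, ← map_mul, mul_nonsing_inv _ hM, map_one,
          one_apply_eq_self]

lemma norm_toEuclideanCLM_inv_mul_apply_le_of_neg_posSemidef {D : Matrix n n ℝ}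
    (hD : (-D).PosSemidef) {a c : ℝ} (ha : 0 ≤ a) (hc : 0 ≤ c) (x : EuclideanSpace ℝ n) :
    ‖toEuclideanCLM (𝕜 := ℝ) ((1 - a • D + c • D ^ 2)⁻¹ * (1 - a • D)) x‖ ≤ ‖x‖ := by
  have hDh : D.IsHermitian := by simpa using hD.isHermitian.neg
  have hsq : (D ^ 2).PosSemidef := by
    simpa only [hDh.eq, pow_two] using posSemidef_conjTranspose_mul_self D
  have hM : (1 - a • D + c • D ^ 2).PosDef := by
    rw [sub_eq_add_neg, add_assoc, ← smul_neg]
    exact PosDef.one.add_posSemidef ((hD.smul ha).add (hsq.smul hc))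
  have hN : (1 - a • D)ᴴ = 1 - a • D := by
    rw [conjTranspose_sub, conjTranspose_one, conjTranspose_smul, hDh.eq, star_trivial]
  have hS : ((2 : ℝ) • (1 - a • D) + c • D ^ 2).PosSemidef := by
    rw [show (2 : ℝ) • (1 - a • D) + c • D ^ 2 = (2 : ℝ) • 1 + ((2 * a) • -D + c • D ^ 2) by
      module]
    exact (PosSemidef.one.smul zero_le_two).add ((hD.smul (by positivity)).add (hsq.smul hc))
  have hdiff : (1 - a • D + c • D ^ 2) * (1 - a • D + c • D ^ 2) - (1 - a • D) * (1 - a • D)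
      = c • (Dᴴ * ((2 : ℝ) • (1 - a • D) + c • D ^ 2) * D) := by
    simp only [hDh.eq, mul_add, add_mul, mul_sub, sub_mul, smul_mul_assoc, mul_smul_comm,
      one_mul, mul_one, pow_two, mul_assoc]
    module
  apply norm_toEuclideanCLM_inv_mul_apply_le ((isUnit_iff_isUnit_det _).mp hM.isUnit)
  · simp only [Commute, SemiconjBy, mul_add, add_mul, mul_sub, sub_mul, smul_mul_assoc,
      mul_smul_comm, one_mul, mul_one, pow_two, mul_assoc]
    module
  · rw [hM.isHermitian.eq, hN, hdiff]
    exact (hS.conjTranspose_mul_mul_same D).smul hc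

end Matrix

-- `(diffMatrix m *ᵥ x) i = x i - x (i - 1)`, with the Dirichlet values `x (-1) = x m = 0`
def diffMatrix (m : ℕ) : Matrix (Fin (m + 1)) (Fin m) ℝ :=
  (1 : Matrix (Fin (m + 1)) (Fin (m + 1)) ℝ).submatrix id Fin.castSucc
    - (1 : Matrix (Fin (m + 1)) (Fin (m + 1)) ℝ).submatrix id Fin.succ

lemma transpose_one_submatrix_mul_one_submatrix {α k l : Type*} [NonAssocSemiring α] [Fintype k]
    [DecidableEq k] (f g : l → k) :
    ((1 : Matrix k k α).submatrix id f)ᵀ * (1 : Matrix k k α).submatrix id g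
      = (1 : Matrix k k α).submatrix f g := by
  rw [transpose_submatrix, transpose_one, ← submatrix_mul _ _ _ _ _ Function.bijective_id,
    Matrix.one_mul]

lemma Dh_eq_neg_smul_diffMatrix (m : ℕ) (h : ℝ) :
    Dh m h = -(h ^ 2)⁻¹ • ((diffMatrix m)ᵀ * diffMatrix m) := by
  ext j k
  simp only [diffMatrix, transpose_sub, Matrix.sub_mul, Matrix.mul_sub,
    transpose_one_submatrix_mul_one_submatrix, Dh, of_apply, Matrix.smul_apply, Matrix.sub_apply,
    submatrix_apply, one_apply, Fin.ext_iff, Fin.val_castSucc, Fin.val_succ, smul_eq_mul]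
  split_ifs <;> first | omega | ring

lemma posSemidef_neg_Dh (m : ℕ) (h : ℝ) : (-Dh m h).PosSemidef := by
  rw [Dh_eq_neg_smul_diffMatrix, neg_smul, neg_neg, ← conjTranspose_eq_transpose_of_trivial]
  exact (posSemidef_conjTranspose_mul_self _).smul (by positivity)

lemma norm_act_Pmat_le (m : ℕ) (h : ℝ) {ΔT : ℝ} (hΔT : 0 ≤ ΔT) (ε : ℝ) (i : ℕ)
    (x : EuclideanSpace ℝ (Fin m)) : ‖act (Pmat m h ΔT ε i) x‖ ≤ ‖x‖ :=
  norm_toEuclideanCLM_inv_mul_apply_le_of_neg_posSemidef (posSemidef_neg_Dh m h)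
    (by positivity) (by positivity) x

lemma le_add_sum_range_of_le_add {α : Type*} [AddCommGroup α] [PartialOrder α]
    [IsOrderedAddMonoid α] {a b : ℕ → α} (hab : ∀ n, a (n + 1) ≤ a n + b n) (n : ℕ) :
    a n ≤ a 0 + ∑ j ∈ Finset.range n, b j := by
  have hsum := Finset.sum_le_sum fun j (_ : j ∈ Finset.range n) => sub_le_iff_le_add'.mpr (hab j)
  rwa [Finset.sum_range_sub, sub_le_iff_le_add'] at hsum

theorem stmt15_general (h ΔT ε : ℝ) (hΔT : 0 < ΔT)
    (m : ℕ)
    (F : EuclideanSpace ℝ (Fin m) → EuclideanSpace ℝ (Fin m))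
    (C : ℝ) (hC : 0 ≤ C)
    (hLTE : ∀ U, ‖F U - act (Pmat m h ΔT ε 1) U‖ ≤ C * ΔT ^ 2 * ‖U‖)
    (u0 : EuclideanSpace ℝ (Fin m)) (U : ℕ → ℕ → EuclideanSpace ℝ (Fin m))
    (h0 : ∀ k, U 0 k = u0)
    (hrec : ∀ n k, U (n + 1) (k + 1) =
      act (Pmat m h ΔT ε 1) (U n (k + 1)) + F (U n k)
        - act (Pmat m h ΔT ε 1) (U n k)) :
    ∀ n k, ‖U (n + 1) (k + 1)‖ ≤ ‖u0‖ +
      C * ((n : ℝ) + 1) * ΔT ^ 2 *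
        ((Finset.range (n + 1)).sup' (Finset.nonempty_range_iff.mpr n.succ_ne_zero)
          fun j => ‖U j k‖) := by
  intro n k
  set S := (Finset.range (n + 1)).sup' (Finset.nonempty_range_iff.mpr n.succ_ne_zero)
    fun j => ‖U j k‖
  have hstep (j : ℕ) : ‖U (j + 1) (k + 1)‖ ≤ ‖U j (k + 1)‖ + C * ΔT ^ 2 * ‖U j k‖ := by
    rw [hrec, add_sub_assoc]
    exact (norm_add_le _ _).trans (add_le_add (norm_act_Pmat_le m h hΔT.le ε 1 _) (hLTE _))
  have hsum : ∑ j ∈ Finset.range (n + 1), C * ΔT ^ 2 * ‖U j k‖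
      ≤ ((n : ℝ) + 1) * (C * ΔT ^ 2 * S) := by
    have hle := Finset.sum_le_card_nsmul (Finset.range (n + 1)) (fun j => C * ΔT ^ 2 * ‖U j k‖)
      (C * ΔT ^ 2 * S) fun j hj =>
        mul_le_mul_of_nonneg_left (Finset.le_sup' (fun j => ‖U j k‖) hj) (by positivity)
    simpa [nsmul_eq_mul] using hle
  calc ‖U (n + 1) (k + 1)‖
      ≤ ‖U 0 (k + 1)‖ + ∑ j ∈ Finset.range (n + 1), C * ΔT ^ 2 * ‖U j k‖ :=
        le_add_sum_range_of_le_add (a := fun j => ‖U j (k + 1)‖) hstep (n + 1)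
    _ ≤ ‖u0‖ + C * ((n : ℝ) + 1) * ΔT ^ 2 * S := by
        rw [h0]
        linarith

theorem stmt15 (h ΔT ε : ℝ) (hh : 0 < h) (hΔT : 0 < ΔT) (hε : 0 < ε)
    (m : ℕ) (hm : 1 ≤ m)
    (F : EuclideanSpace ℝ (Fin m) → EuclideanSpace ℝ (Fin m))
    (C : ℝ) (hC : 0 ≤ C)
    (hLTE : ∀ U, ‖F U - act (Pmat m h ΔT ε 1) U‖ ≤ C * ΔT ^ 2 * ‖U‖)
    (u0 : EuclideanSpace ℝ (Fin m)) (U : ℕ → ℕ → EuclideanSpace ℝ (Fin m))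
    (h0 : ∀ k, U 0 k = u0)
    (hrec : ∀ n k, U (n + 1) (k + 1) =
      act (Pmat m h ΔT ε 1) (U n (k + 1)) + F (U n k)
        - act (Pmat m h ΔT ε 1) (U n k)) :
    ∀ n k, ‖U (n + 1) (k + 1)‖ ≤ ‖u0‖ +
      C * ((n : ℝ) + 1) * ΔT ^ 2 *
        ((Finset.range (n + 1)).sup' (Finset.nonempty_range_iff.mpr n.succ_ne_zero)
          fun j => ‖U j k‖) :=
  stmt15_general h ΔT ε hΔT m F C hC hLTE u0 U h0 hrec
end
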